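/- Fix an integer k ≥ 1 and an ordinal α. The converse of the one-step extension relation ≻₁ on k-Tr(α) is well-founded, and the ordinal rank of the empty tree Nil in k-Tr(α) with respect to ≻₁ (where rank(T) = sup{ rank(T') + 1 : T' ≻₁ T }) equals hNil_k(α); in particular, the rank of Nil in k-Tr(α) equals sup{ (rank of Nil in k-Tr(β)) * k + 1 : β < α }, where γ * k denotes the k-fold natural (Hessenberg) sum of γ with itself. -/

import Mathlib

/-- Natural (Hessenberg) addition of ordinals, as defined in the older Mathlib
(removed from current Mathlib). -/
noncomputable def Ordinal.nadd : Ordinal.{u} → Ordinal.{u} → Ordinal.{u}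
  | a, b =>
    max (Ordinal.blsub.{u, u} a fun a' _ => Ordinal.nadd a' b)
      (Ordinal.blsub.{u, u} b fun b' _ => Ordinal.nadd a b')
termination_by a b => (a, b)
decreasing_by
  · exact Prod.Lex.left _ _ ‹_›
  · exact Prod.Lex.right _ ‹_›

/-- `nmulNat γ k` is the `k`-fold natural (Hessenberg) sum `γ ⊕ ⋯ ⊕ γ`. -/
noncomputable def nmulNat (γ : Ordinal) : ℕ → Ordinal
  | 0 => 0
  | n + 1 => Ordinal.nadd (nmulNat γ n) γ

/-- `hNil k α = sup { hNil k β * k + 1 : β < α }`, where `* k` is the `k`-fold natural sum. -/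
noncomputable def hNil (k : ℕ) (α : Ordinal) : Ordinal :=
  ⨆ β : Set.Iio α, nmulNat (hNil k β.1) k + 1
termination_by α
decreasing_by exact β.2
/-- Finite `k`-branching trees with ordinal labels: every node has `k` ordered child
positions, each vacant (`nil`) or occupied by a child node. -/
inductive KTree (k : ℕ) : Type 1 where
  | nil : KTree k
  | node : Ordinal → (Fin k → KTree k) → KTree k

/-- `T.Valid α` : every label is `< α` and every child's label is strictly smaller than
its parent's label; i.e. `T ∈ k-Tr(α)`. -/
def KTree.Valid {k : ℕ} : KTree k → Ordinal → Prop
  | .nil, _ => True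
  | .node β ts, α => β < α ∧ ∀ i, (ts i).Valid β

/-- One-step extension `T' ≻₁ T`: `T'` is obtained from `T` by adding exactly one node
(at a vacant child position, or as the root when `T` is empty). -/
inductive KTree.Ext1 {k : ℕ} : KTree k → KTree k → Prop
  | root (β : Ordinal) : Ext1 (.node β fun _ => .nil) .nil
  | child {β : Ordinal} {ts' ts : Fin k → KTree k} (i : Fin k) :
      Ext1 (ts' i) (ts i) → (∀ j, j ≠ i → ts' j = ts j) → Ext1 (.node β ts') (.node β ts)

/-- Natural (Hessenberg) sum of a finite family of ordinals. -/
noncomputable def natSumFin {k : ℕ} (f : Fin k → Ordinal) : Ordinal :=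
  (List.ofFn f).foldr Ordinal.nadd 0

/-- `hAux T α`: for nonempty `T` this is the natural sum, over all vacant child positions
of `T`, of `hNil k β` where `β` is the label of the node owning that vacant position;
`hAux nil α = hNil k α`.  This is the function `h_k(·, α)`. -/
noncomputable def hAux {k : ℕ} : KTree k → Ordinal → Ordinal
  | .nil, α => hNil k α
  | .node β ts, _ => natSumFin fun i => hAux (ts i) β

/-- The rank of an element under a well-founded relation:
`rank x = sup { rank y + 1 : r y x }`. -/
noncomputable def WFRank {α : Type*} {r : α → α → Prop} (hwf : WellFounded r) (a : α) :
    Ordinal := (hwf.apply a).rank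

/-! The function `hAux · γ` is a potential on `k-Tr(γ)`: it strictly decreases along each
one-step extension, and every value below `hAux T γ` is reached (up to `≤`) by some one-step
extension of `T`. A well-founded relation admitting such a potential has it as its rank
function, and at `Nil` the potential is `hNil k γ`. The two properties of `hAux` come from
strict monotonicity of natural addition in each argument and from the characterisation
`ξ < a ⊕ b ↔ (∃ a' < a, ξ ≤ a' ⊕ b) ∨ (∃ b' < b, ξ ≤ a ⊕ b')`. -/

namespace Ordinal

theorem lt_nadd_iff {ξ a b : Ordinal} :
    ξ < nadd a b ↔ (∃ a' < a, ξ ≤ nadd a' b) ∨ ∃ b' < b, ξ ≤ nadd a b' := by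
  rw [nadd, lt_max_iff, lt_blsub_iff, lt_blsub_iff]
  simp only [exists_prop]

theorem nadd_lt_nadd_right {a' a : Ordinal} (h : a' < a) (b : Ordinal) :
    nadd a' b < nadd a b :=
  lt_nadd_iff.2 (Or.inl ⟨a', h, le_rfl⟩)

theorem nadd_lt_nadd_left {b' b : Ordinal} (h : b' < b) (a : Ordinal) :
    nadd a b' < nadd a b :=
  lt_nadd_iff.2 (Or.inr ⟨b', h, le_rfl⟩)

theorem nadd_le_nadd_right {a' a : Ordinal} (h : a' ≤ a) (b : Ordinal) :
    nadd a' b ≤ nadd a b :=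
  StrictMono.monotone (fun _ _ h' => nadd_lt_nadd_right h' b) h

theorem nadd_le_nadd_left {b' b : Ordinal} (h : b' ≤ b) (a : Ordinal) :
    nadd a b' ≤ nadd a b :=
  StrictMono.monotone (fun _ _ h' => nadd_lt_nadd_left h' a) h

theorem nadd_comm (a b : Ordinal) : nadd a b = nadd b a := by
  rw [nadd.eq_1 a b, nadd.eq_1 b a, max_comm]
  congr 2 <;> funext c _
  · exact nadd_comm a c
  · exact nadd_comm c b
termination_by (a, b)

end Ordinal

open Ordinal Function

theorem natSumFin_succ {n : ℕ} (f : Fin (n + 1) → Ordinal) :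
    natSumFin f = nadd (f 0) (natSumFin fun i => f i.succ) := by
  simp [natSumFin, List.ofFn_succ]

theorem natSumFin_const (k : ℕ) (γ : Ordinal) :
    natSumFin (fun _ : Fin k => γ) = nmulNat γ k := by
  induction k with
  | zero => rfl
  | succ n ih => rw [natSumFin_succ, ih, nmulNat, nadd_comm]

theorem natSumFin_lt_natSumFin {k : ℕ} {f g : Fin k → Ordinal} (i : Fin k) (hi : f i < g i)
    (heq : ∀ j, j ≠ i → f j = g j) : natSumFin f < natSumFin g := by
  induction k with
  | zero => exact i.elim0
  | succ n ih =>
    rw [natSumFin_succ, natSumFin_succ]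
    cases i using Fin.cases with
    | zero =>
      have htail : (fun j : Fin n => f j.succ) = fun j => g j.succ :=
        funext fun j => heq _ (Fin.succ_ne_zero j)
      rw [htail]
      exact nadd_lt_nadd_right hi _
    | succ i =>
      rw [heq 0 (Fin.succ_ne_zero i).symm]
      exact nadd_lt_nadd_left (ih i hi fun j hj => heq _ (fun h => hj (Fin.succ_injective _ h))) _

theorem exists_le_natSumFin_update_of_lt {k : ℕ} {f : Fin k → Ordinal} {ξ : Ordinal}
    (h : ξ < natSumFin f) :
    ∃ i, ∃ η < f i, ∀ x, η ≤ x → ξ ≤ natSumFin (update f i x) := by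
  induction k generalizing ξ with
  | zero => simp [natSumFin] at h
  | succ n ih =>
    rw [natSumFin_succ] at h
    rcases lt_nadd_iff.1 h with ⟨a', ha', hle⟩ | ⟨b', hb', hle⟩
    · refine ⟨0, a', ha', fun x hx => ?_⟩
      have htail : (fun i : Fin n => update f 0 x i.succ) = fun i => f i.succ :=
        funext fun i => update_of_ne (Fin.succ_ne_zero i) _ _
      rw [natSumFin_succ, update_self, htail]
      exact hle.trans (nadd_le_nadd_right hx _)
    · obtain ⟨i, η, hη, H⟩ := ih hb'
      refine ⟨i.succ, η, hη, fun x hx => ?_⟩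
      have htail : (fun j : Fin n => update f i.succ x j.succ)
          = update (fun j => f j.succ) i x := by
        funext j
        simp only [update_apply, Fin.succ_inj]
      rw [natSumFin_succ, update_of_ne (Fin.succ_ne_zero i).symm, htail]
      exact hle.trans (nadd_le_nadd_left (H x hx) _)

theorem lt_hNil_iff {k : ℕ} {α : Ordinal.{u}} {ξ : Ordinal.{max u v}} :
    ξ < hNil k α ↔ ∃ β < α, ξ ≤ nmulNat (hNil k β) k := by
  have : Small.{max u v} (Set.Iio α) := small_lift _
  rw [hNil, Ordinal.lt_iSup_iff]
  simp only [Subtype.exists, Set.mem_Iio, exists_prop, Order.lt_add_one_iff]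

theorem hNil_eq_sSup (k : ℕ) (α : Ordinal.{u}) :
    (hNil k α : Ordinal.{max u v}) = sSup {o | ∃ β < α, o = nmulNat (hNil k β) k + 1} := by
  rw [hNil, iSup]
  congr 1
  ext o
  simp only [Set.mem_range, Subtype.exists, Set.mem_Iio, exists_prop, eq_comm, Set.mem_ofPred_eq]

theorem hAux_node_nil {k : ℕ} (β γ : Ordinal) :
    (hAux (.node β fun _ => .nil : KTree k) γ : Ordinal.{v}) = nmulNat (hNil k β) k := by
  simp only [hAux]
  exact natSumFin_const k _

theorem KTree.Ext1.hAux_lt {k : ℕ} {T' T : KTree k} (h : T'.Ext1 T) {γ : Ordinal}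
    (hT' : T'.Valid γ) : (hAux T' γ : Ordinal.{v}) < hAux T γ := by
  induction h generalizing γ with
  | root β =>
    rw [hAux_node_nil, hAux]
    exact lt_hNil_iff.2 ⟨β, hT'.1, le_rfl⟩
  | child i _ heq ih =>
    exact natSumFin_lt_natSumFin i (ih (hT'.2 i)) fun j hj => by rw [heq j hj]

theorem lt_hAux_iff {k : ℕ} {T : KTree k} {γ : Ordinal} (hT : T.Valid γ) {ξ : Ordinal.{v}} :
    ξ < hAux T γ ↔ ∃ T', T'.Ext1 T ∧ T'.Valid γ ∧ ξ ≤ hAux T' γ := by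
  refine ⟨fun hξ => ?_, fun ⟨T', hext, hT', hle⟩ => hle.trans_lt (hext.hAux_lt hT')⟩
  induction T generalizing γ ξ with
  | nil =>
    obtain ⟨β, hβ, hle⟩ := lt_hNil_iff.1 hξ
    exact ⟨.node β fun _ => .nil, .root β, ⟨hβ, fun _ => trivial⟩,
      (hAux_node_nil β γ).ge.trans' hle⟩
  | node β ts ih =>
    obtain ⟨i, η, hη, H⟩ := exists_le_natSumFin_update_of_lt hξ
    obtain ⟨T'', hext, hT'', hle⟩ := ih i (hT.2 i) hη
    refine ⟨.node β (update ts i T''), .child i (by rwa [update_self])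
      (fun j hj => update_of_ne hj _ _), ⟨hT.1, fun j => ?_⟩, ?_⟩
    · rcases eq_or_ne j i with rfl | hj
      · rwa [update_self]
      · rw [update_of_ne hj]; exact hT.2 j
    · have hsum : natSumFin (fun j => (hAux (update ts i T'' j) β : Ordinal.{v}))
          = natSumFin (update (fun j => hAux (ts j) β) i (hAux T'' β)) :=
        congrArg natSumFin (comp_update (hAux · β) ts i T'')
      rw [hAux, hsum]
      exact H _ hle

theorem wfRank_eq_of_lt_iff {α : Type u} {r : α → α → Prop} (hwf : WellFounded r)
    {f : α → Ordinal.{u}} (hf : ∀ x ξ, ξ < f x ↔ ∃ y, r y x ∧ ξ ≤ f y) :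
    WFRank hwf = f := by
  funext x
  induction x using hwf.induction with
  | _ x ih =>
    have hrank : WFRank hwf x = ⨆ y : {y // r y x}, Order.succ (f y) := by
      rw [WFRank, Acc.rank_eq]
      congr 1
      funext y
      rw [← ih y y.2]
      rfl
    rw [hrank]
    refine le_antisymm (Ordinal.iSup_le fun y => ?_) (le_of_forall_lt fun ξ hξ => ?_)
    · exact Order.succ_le_of_lt ((hf x _).2 ⟨y, y.2, le_rfl⟩)
    · obtain ⟨y, hy, hle⟩ := (hf x ξ).1 hξ
      exact Ordinal.lt_iSup_iff.2 ⟨⟨y, hy⟩, Order.lt_succ_iff.2 hle⟩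

theorem wellFounded_ext1_valid (k : ℕ) (γ : Ordinal) :
    WellFounded fun T' T : {T : KTree k // T.Valid γ} => T'.1.Ext1 T.1 :=
  Subrelation.wf (fun {T' _} h => h.hAux_lt.{0} T'.2)
    (InvImage.wf (fun T : {T : KTree k // T.Valid γ} => hAux T.1 γ) wellFounded_lt)

theorem wfRank_eq_hAux {k : ℕ} {γ : Ordinal}
    (hwf : WellFounded fun T' T : {T : KTree k // T.Valid γ} => T'.1.Ext1 T.1) :
    WFRank hwf = fun T => hAux T.1 γ :=
  wfRank_eq_of_lt_iff hwf fun T _ => by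
    simp only [lt_hAux_iff T.2, Subtype.exists, exists_prop, and_left_comm]

theorem stmt_6_general (k : ℕ) (α : Ordinal) :
    ∃ hwf : ∀ γ : Ordinal,
        WellFounded (fun T' T : {T : KTree k // T.Valid γ} => T'.1.Ext1 T.1),
      WFRank (hwf α) ⟨KTree.nil, trivial⟩ = hNil k α ∧
      WFRank (hwf α) ⟨KTree.nil, trivial⟩ =
        sSup {o : Ordinal | ∃ β < α,
          o = nmulNat (WFRank (hwf β) ⟨KTree.nil, trivial⟩) k + 1} := by
  have rank_nil (β : Ordinal) :
      WFRank (wellFounded_ext1_valid k β) ⟨KTree.nil, trivial⟩ = hNil k β := by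
    simp only [wfRank_eq_hAux, hAux]
  refine ⟨wellFounded_ext1_valid k, rank_nil α, ?_⟩
  simp only [rank_nil]
  exact hNil_eq_sSup k α

/-- the converse of one-step extension `≻₁` on `k-Tr(α)` is well-founded, the
ordinal rank of the empty tree `Nil` in `k-Tr(α)` equals `hNil k α`, and in particular it
equals `sup { (rank of Nil in k-Tr(β)) * k + 1 : β < α }` with `* k` the `k`-fold natural
sum. -/
theorem stmt_6 (k : ℕ) (hk : 1 ≤ k) (α : Ordinal) :
    ∃ hwf : ∀ γ : Ordinal,
        WellFounded (fun T' T : {T : KTree k // T.Valid γ} => T'.1.Ext1 T.1),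
      WFRank (hwf α) ⟨KTree.nil, trivial⟩ = hNil k α ∧
      WFRank (hwf α) ⟨KTree.nil, trivial⟩ =
        sSup {o : Ordinal | ∃ β < α,
          o = nmulNat (WFRank (hwf β) ⟨KTree.nil, trivial⟩) k + 1} :=
  stmt_6_general k α
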